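/- arXiv:2210.16664 — 2 statements merged into one kernel-verified Lean document; each statement's English description precedes it below -/
import Mathlib

section
/- Let g be a continuously differentiable convex function on ℝⁿ, ‖·‖ a norm on ℝⁿ, γ > 0, and let ℝⁿ_o denote the set of vectors with all coordinates nonzero. Assume for every x ∈ ℝⁿ_o there is r_x > 0 such that the ‖·‖-ball V_x of radius r_x centered at x is contained in ℝⁿ_o and g(v) ≤ g(u) + ⟨g'(u), v−u⟩ + (γ/2)‖u−v‖² for all u, v ∈ V_x. Then ‖g'(x) − g'(y)‖_* ≤ γ‖x−y‖ for all x, y ∈ ℝⁿ. -/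
open scoped RealInnerProductSpace
open Real Matrix

/-- `N` is a norm on the real vector space `E`. -/
def IsNorm {E : Type*} [AddCommGroup E] [Module ℝ E] (N : E → ℝ) : Prop :=
  (∀ x, 0 ≤ N x) ∧ (∀ x, N x = 0 ↔ x = 0) ∧
    (∀ (c : ℝ) (x), N (c • x) = |c| * N x) ∧ ∀ x y, N (x + y) ≤ N x + N y

/-- The conjugate (dual) norm of `N`: `‖y‖_* = sup {⟨y,x⟩ : N x ≤ 1}`. -/
noncomputable def dualNorm {E : Type*} [NormedAddCommGroup E] [InnerProductSpace ℝ E]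
    (N : E → ℝ) (y : E) : ℝ :=
  sSup {r | ∃ x, N x ≤ 1 ∧ r = ⟪y, x⟫}

/-- `N` is a `κ`-smooth norm: its square `Φ` is `C¹` and satisfies
`Φ(x+h) ≤ Φ(x) + ⟨∇Φ(x),h⟩ + κ Φ(h)`. -/
def IsSmoothNorm {E : Type*} [NormedAddCommGroup E] [InnerProductSpace ℝ E] [CompleteSpace E]
    (κ : ℝ) (N : E → ℝ) : Prop :=
  IsNorm N ∧ ContDiff ℝ 1 (fun x => N x ^ 2) ∧
    ∀ x h, N (x + h) ^ 2 ≤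
      N x ^ 2 + ⟪gradient (fun z => N z ^ 2) x, h⟫ + κ * N h ^ 2

/-- `N` is a `(κ,ς)`-regular norm: within factor `ς` of a `κ`-smooth norm. -/
def IsRegularNorm {E : Type*} [NormedAddCommGroup E] [InnerProductSpace ℝ E] [CompleteSpace E]
    (κ ς : ℝ) (N : E → ℝ) : Prop :=
  ∃ M : E → ℝ, IsSmoothNorm κ M ∧ ∀ x, ς⁻¹ * M x ≤ N x ∧ N x ≤ ς * M x

/-!
For `N z ≤ 1` and points `A`, `B` of a ball on which the descent inequality holds, adding the
descent inequality from `A` to `B`, the one from `B` to `w = B - N (B - A) • z`, and the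
gradient inequality of convexity from `A` to `w` gives `⟪g' B - g' A, z⟫ ≤ γ N (B - A)`.
Hence along a segment `t ↦ c t` from `y` to `x` the function `⟪g' (c t), z⟫ - γ N (x - y) t`
is locally nonincreasing wherever `c t ∈ ℝⁿ_o`. After shifting `x` and `y` along the diagonal,
the segment meets the coordinate hyperplanes only finitely often, and continuity of `g'`
carries the monotonicity across these points and lets the shift go to `0`; the supremum over
`z` is the dual norm.
-/

open Set Filter Topology

theorem Continuous.le_of_forall_eventually_nhdsGT_le {f : ℝ → ℝ} (hf : Continuous f) {a b : ℝ}
    (hab : a ≤ b) (H : ∀ t ∈ Ioo a b, ∀ᶠ s in 𝓝[>] t, f s ≤ f t) : f b ≤ f a := by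
  have hinner : ∀ a' ∈ Ioo a b, f b ≤ f a' := fun a' ha' =>
    ((isClosed_le hf continuous_const).inter isClosed_Icc).Icc_subset_of_forall_mem_nhdsWithin
      (s := {t | f t ≤ f a'}) (le_refl (f a'))
      (fun t ht => (H t ⟨ha'.1.trans_le ht.2.1, ht.2.2⟩).mono fun s hs => hs.trans ht.1)
      ⟨ha'.2.le, le_rfl⟩
  rcases hab.eq_or_lt with rfl | hab
  · rfl
  exact ge_of_tendsto ((hf.tendsto a).mono_left nhdsWithin_le_nhds)
    (eventually_of_mem (Ioo_mem_nhdsGT hab) hinner)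

theorem Continuous.le_of_forall_eventually_nhdsGT_le_off_finite {f : ℝ → ℝ} (hf : Continuous f)
    {S : Set ℝ} (hS : S.Finite) {a b : ℝ} (hab : a ≤ b)
    (H : ∀ t ∈ Ioo a b \ S, ∀ᶠ s in 𝓝[>] t, f s ≤ f t) : f b ≤ f a := by
  induction S, hS using Set.Finite.induction_on generalizing a b with
  | empty => exact hf.le_of_forall_eventually_nhdsGT_le hab fun t ht => H t ⟨ht, id⟩
  | @insert t₀ S _ _ ih =>
    by_cases ht₀ : t₀ ∈ Ioo a b
    · refine (ih ht₀.2.le fun t ht => H t ⟨⟨ht₀.1.trans ht.1.1, ht.1.2⟩, ?_⟩).trans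
        (ih ht₀.1.le fun t ht => H t ⟨⟨ht.1.1, ht.1.2.trans ht₀.2⟩, ?_⟩)
      · exact fun h => h.elim (fun e => ht.1.1.ne' e) ht.2
      · exact fun h => h.elim (fun e => ht.1.2.ne e) ht.2
    · exact ih hab fun t ht => H t ⟨ht.1, fun h => h.elim (fun e => ht₀ (e ▸ ht.1)) ht.2⟩

namespace IsNorm

variable {E : Type*} [AddCommGroup E] [Module ℝ E] {N : E → ℝ}

theorem nonneg (hN : IsNorm N) (x : E) : 0 ≤ N x := hN.1 x

theorem eq_zero_iff (hN : IsNorm N) {x : E} : N x = 0 ↔ x = 0 := hN.2.1 x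

theorem add_le (hN : IsNorm N) (x y : E) : N (x + y) ≤ N x + N y := hN.2.2.2 x y

theorem neg (hN : IsNorm N) (x : E) : N (-x) = N x := by
  simpa using hN.2.2.1 (-1) x

theorem sub_comm (hN : IsNorm N) (x y : E) : N (x - y) = N (y - x) := by
  rw [← hN.neg, neg_sub]

theorem smul_of_nonneg (hN : IsNorm N) {c : ℝ} (hc : 0 ≤ c) (x : E) : N (c • x) = c * N x := by
  rw [hN.2.2.1, abs_of_nonneg hc]

end IsNorm

variable {E : Type*} [NormedAddCommGroup E] [InnerProductSpace ℝ E] [CompleteSpace E]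

theorem ConvexOn.add_inner_le_of_hasGradientAt {s : Set E} {g : E → ℝ} (hconv : ConvexOn ℝ s g)
    {v w d : E} (hv : v ∈ s) (hw : w ∈ s) (hd : HasGradientAt g d v) :
    g v + ⟪d, w - v⟫ ≤ g w := by
  have hline : ConvexOn ℝ (AffineMap.lineMap v w ⁻¹' s) (g ∘ AffineMap.lineMap v w) :=
    hconv.comp_affineMap _
  have hderiv : HasDerivAt (g ∘ AffineMap.lineMap (k := ℝ) v w) ⟪d, w - v⟫ 0 := by
    have hd' : HasFDerivAt g (InnerProductSpace.toDual ℝ E d) (AffineMap.lineMap v w (0 : ℝ)) := by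
      simpa using hd.hasFDerivAt
    simpa using hd'.comp_hasDerivAt 0 AffineMap.hasDerivAt_lineMap
  have := hline.le_slope_of_hasDerivAt (x := 0) (y := 1) (by simpa) (by simpa) one_pos hderiv
  simp only [slope_def_field, Function.comp_apply, AffineMap.lineMap_apply_one,
    AffineMap.lineMap_apply_zero, sub_zero, div_one] at this
  linarith

variable {g : E → ℝ} {g' : E → E} {N : E → ℝ} {γ : ℝ}

theorem inner_sub_le_of_descent (hg : ∀ x, HasGradientAt g (g' x) x)
    (hconv : ConvexOn ℝ univ g) (hN : IsNorm N) (hγ : 0 ≤ γ) {U : Set E}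
    (hdesc : ∀ u ∈ U, ∀ v ∈ U, g v ≤ g u + ⟪g' u, v - u⟫ + γ / 2 * N (u - v) ^ 2)
    {A B z : E} (hA : A ∈ U) (hB : B ∈ U) (hw : B - N (B - A) • z ∈ U) (hz : N z ≤ 1) :
    ⟪g' B - g' A, z⟫ ≤ γ * N (B - A) := by
  set s := N (B - A)
  have hs0 : 0 ≤ s := hN.nonneg _
  have hBw : g (B - s • z) ≤ g B - s * ⟪g' B, z⟫ + γ / 2 * (s * N z) ^ 2 := by
    have := hdesc B hB _ hw
    rwa [sub_sub_cancel_left, sub_sub_cancel, inner_neg_right, real_inner_smul_right,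
      hN.smul_of_nonneg hs0, ← sub_eq_add_neg] at this
  have hAw : g A + ⟪g' A, B - A⟫ - s * ⟪g' A, z⟫ ≤ g (B - s • z) := by
    have := hconv.add_inner_le_of_hasGradientAt (mem_univ A) (mem_univ (B - s • z)) (hg A)
    rwa [sub_right_comm, inner_sub_right, real_inner_smul_right, ← add_sub_assoc] at this
  have hAB : g B ≤ g A + ⟪g' A, B - A⟫ + γ / 2 * s ^ 2 := by
    simpa only [hN.sub_comm A B] using hdesc A hA B hB
  rcases hs0.eq_or_lt with hzero | hspos
  · obtain rfl : B = A := sub_eq_zero.1 (hN.eq_zero_iff.1 hzero.symm)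
    simpa using mul_nonneg hγ hs0
  · have hz2 : N z ^ 2 ≤ 1 := by nlinarith [hN.nonneg z]
    refine le_of_mul_le_mul_left ?_ hspos
    rw [inner_sub_left]
    nlinarith [mul_nonneg (mul_nonneg hγ (sq_nonneg s)) (sub_nonneg.2 hz2)]

theorem inner_sub_le_of_descent_on_ball (hg : ∀ x, HasGradientAt g (g' x) x)
    (hconv : ConvexOn ℝ univ g) (hN : IsNorm N) (hγ : 0 ≤ γ) {x₀ : E} {r : ℝ}
    (hdesc : ∀ u ∈ {u | N (u - x₀) < r}, ∀ v ∈ {u | N (u - x₀) < r},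
      g v ≤ g u + ⟪g' u, v - u⟫ + γ / 2 * N (u - v) ^ 2)
    {v z : E} (hv : 2 * N (v - x₀) < r) (hz : N z ≤ 1) :
    ⟪g' v - g' x₀, z⟫ ≤ γ * N (v - x₀) := by
  have hv0 := hN.nonneg (v - x₀)
  refine inner_sub_le_of_descent hg hconv hN hγ hdesc ?_ ?_ ?_ hz
  · show N (x₀ - x₀) < r
    rw [sub_self, hN.eq_zero_iff.2 rfl]
    linarith
  · show N (v - x₀) < r
    linarith
  · show N (v - N (v - x₀) • z - x₀) < r
    calc N (v - N (v - x₀) • z - x₀) = N ((v - x₀) + -(N (v - x₀) • z)) := by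
          congr 1; abel
      _ ≤ N (v - x₀) + N (v - x₀) * N z := by
          grw [hN.add_le]; rw [hN.neg, hN.smul_of_nonneg hv0]
      _ < r := by nlinarith

theorem inner_sub_le_of_finite_segment_compl (hg : ∀ x, HasGradientAt g (g' x) x)
    (hg'c : Continuous g') (hconv : ConvexOn ℝ univ g) (hN : IsNorm N) (hγ : 0 ≤ γ) {G : Set E}
    (hG : ∀ x₀ ∈ G, ∃ r > (0 : ℝ), ∀ u ∈ {u | N (u - x₀) < r}, ∀ v ∈ {u | N (u - x₀) < r},
      g v ≤ g u + ⟪g' u, v - u⟫ + γ / 2 * N (u - v) ^ 2)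
    {x y z : E} (hfin : {t : ℝ | y + t • (x - y) ∉ G}.Finite) (hz : N z ≤ 1) :
    ⟪g' x - g' y, z⟫ ≤ γ * N (x - y) := by
  set c : ℝ → E := fun t => y + t • (x - y)
  set f : ℝ → ℝ := fun t => ⟪g' (c t), z⟫ - γ * N (x - y) * t
  have hf : Continuous f := by fun_prop
  have hlocal : ∀ t ∈ Ioo 0 1 \ {t | c t ∉ G}, ∀ᶠ s in 𝓝[>] t, f s ≤ f t := by
    rintro t ⟨-, hct⟩
    obtain ⟨r, hr, hdesc⟩ := hG (c t) (not_not.1 hct)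
    have hsmall : ∀ᶠ s in 𝓝 t, 2 * ((s - t) * N (x - y)) < r :=
      (by fun_prop : Continuous fun s => 2 * ((s - t) * N (x - y))).continuousAt.eventually_lt
        continuousAt_const (by simpa using hr)
    filter_upwards [self_mem_nhdsWithin, nhdsWithin_le_nhds hsmall] with s (hts : t < s) hs
    have hcs : N (c s - c t) = (s - t) * N (x - y) := by
      rw [← hN.smul_of_nonneg (sub_nonneg.2 hts.le)]
      congr 1
      simp only [c]
      module
    have := inner_sub_le_of_descent_on_ball hg hconv hN hγ hdesc (hcs ▸ hs) hz
    rw [hcs, inner_sub_left] at this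
    simp only [f]
    nlinarith
  have := hf.le_of_forall_eventually_nhdsGT_le_off_finite hfin zero_le_one hlocal
  simp only [f, c, zero_smul, add_zero, one_smul, add_sub_cancel, mul_zero, sub_zero,
    mul_one] at this
  rw [inner_sub_left]
  linarith

theorem Continuous.le_of_forall_notMem_finite {φ : ℝ → ℝ} (hφ : Continuous φ) {S : Set ℝ}
    (hS : S.Finite) {C : ℝ} (h : ∀ ε ∉ S, φ ε ≤ C) (ε : ℝ) : φ ε ≤ C := by
  have hclosure : closure Sᶜ ⊆ {ε | φ ε ≤ C} := (isClosed_le hφ continuous_const).closure_subset_iff.2 h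
  exact hclosure ((hS.countable.dense_compl ℝ).closure_eq ▸ mem_univ ε)

theorem finite_setOf_exists_segment_apply_eq_zero {ι : Type*} [Finite ι]
    {x y : EuclideanSpace ℝ ι} (hx : ∀ i, x i ≠ 0) :
    {t : ℝ | ∃ i, (y + t • (x - y)) i = 0}.Finite := by
  simp only [ofPred_exists]
  refine finite_iUnion fun i => Subsingleton.finite fun t₁ h₁ t₂ h₂ => ?_
  simp only [mem_ofPred_eq, PiLp.add_apply, PiLp.smul_apply, PiLp.sub_apply, smul_eq_mul] at h₁ h₂
  have : (t₁ - t₂) * (x i - y i) = 0 := by linarith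
  rcases mul_eq_zero.1 this with h | h
  · linarith
  · rw [h, mul_zero, add_zero] at h₁
    exact absurd (by linarith : x i = 0) (hx i)

/-- if a `C¹` convex function on `ℝⁿ` satisfies the local
descent-lemma inequality on small `‖·‖`-balls around each point of
`ℝⁿ_o = {x : ∀ i, xᵢ ≠ 0}`, its gradient is globally `γ`-Lipschitz. -/
theorem stmt_7 {n : ℕ} (g : EuclideanSpace ℝ (Fin n) → ℝ)
    (g' : EuclideanSpace ℝ (Fin n) → EuclideanSpace ℝ (Fin n))
    (hg : ∀ x, HasGradientAt g (g' x) x) (hg'c : Continuous g')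
    (hconv : ConvexOn ℝ Set.univ g)
    (N : EuclideanSpace ℝ (Fin n) → ℝ) (hN : IsNorm N)
    (γ : ℝ) (hγ : 0 < γ)
    (hball : ∀ x : EuclideanSpace ℝ (Fin n), (∀ i, x i ≠ 0) →
      ∃ r > (0 : ℝ),
        {u : EuclideanSpace ℝ (Fin n) | N (u - x) < r} ⊆ {u | ∀ i, u i ≠ 0} ∧
        ∀ u ∈ {u : EuclideanSpace ℝ (Fin n) | N (u - x) < r},
          ∀ v ∈ {u : EuclideanSpace ℝ (Fin n) | N (u - x) < r},
            g v ≤ g u + ⟪g' u, v - u⟫ + γ / 2 * N (u - v) ^ 2) :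
    ∀ x y, dualNorm N (g' x - g' y) ≤ γ * N (x - y) := by
  intro x y
  refine Real.sSup_le ?_ (mul_nonneg hγ.le (hN.nonneg _))
  rintro _ ⟨z, hz, rfl⟩
  have hG : ∀ x₀ ∈ {u : EuclideanSpace ℝ (Fin n) | ∀ i, u i ≠ 0}, ∃ r > (0 : ℝ),
      ∀ u ∈ {u | N (u - x₀) < r}, ∀ v ∈ {u | N (u - x₀) < r},
        g v ≤ g u + ⟪g' u, v - u⟫ + γ / 2 * N (u - v) ^ 2 :=
    fun x₀ hx₀ => (hball x₀ hx₀).imp fun _ ⟨hr, _, hdesc⟩ => ⟨hr, hdesc⟩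
  -- shifting along the diagonal makes the segment leave `ℝⁿ_o` only finitely often
  set o : EuclideanSpace ℝ (Fin n) := WithLp.toLp 2 fun _ => 1
  have hshift : ∀ ε ∉ range fun i => -x i,
      ⟪g' (x + ε • o) - g' (y + ε • o), z⟫ ≤ γ * N (x - y) := by
    intro ε hε
    have hxε : ∀ i, (x + ε • o) i ≠ 0 := fun i h => hε ⟨i, by
      simp only [PiLp.add_apply, PiLp.smul_apply, smul_eq_mul, mul_one, o] at h
      linarith⟩
    have hfin : {t : ℝ | (y + ε • o) + t • ((x + ε • o) - (y + ε • o)) ∉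
        {u : EuclideanSpace ℝ (Fin n) | ∀ i, u i ≠ 0}}.Finite :=
      (finite_setOf_exists_segment_apply_eq_zero (y := y + ε • o) hxε).subset fun t ht => by
        simpa only [mem_ofPred_eq, not_forall, not_not] using ht
    simpa only [add_sub_add_right_eq_sub] using
      inner_sub_le_of_finite_segment_compl hg hg'c hconv hN hγ.le hG hfin hz
  simpa using (by fun_prop : Continuous fun ε : ℝ => ⟪g' (x + ε • o) - g' (y + ε • o), z⟫)
    |>.le_of_forall_notMem_finite (finite_range _) hshift 0
end

section
/- Let ‖·‖ be a (κ,ς)-regular norm on ℝⁿ and P : ℝⁿ → ℝᵖ a surjective linear map. Then the factor-norm ‖u‖' = min{‖x‖ : Px = u} on ℝᵖ is (κ,ς)-regular. -/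
/-!
Minimal lifts show that factor norms of norms within factor `ς` of each other are again within
factor `ς`, so it suffices that the factor norm `M'` of a `κ`-smooth norm `M` is `κ`-smooth. Fix
for each `u` a lift `x u` with `M (x u) = M' u`. By minimality the gradient `g` of `M ^ 2` at
`x u` is orthogonal to `ker P`, so `⟪g, ·⟫` descends to a functional `⟪y u, ·⟫` on `ℝᵖ`,
and lifting `u + v` by `x u + x v` gives
`M' (u + v) ^ 2 ≤ M' u ^ 2 + ⟪y u, v⟫ + κ M' v ^ 2`.
Midpoint convexity of `M' ^ 2` turns this into a two-sided `O(‖v‖ ^ 2)` estimate, which forces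
`M' ^ 2` to be differentiable with Lipschitz gradient `y`.
-/

open scoped RealInnerProductSpace
open Real Matrix

open Set Filter InnerProductSpace

namespace IsNorm

section Module

variable {E : Type*} [AddCommGroup E] [Module ℝ E] {N : E → ℝ}

theorem map_zero (hN : IsNorm N) : N 0 = 0 :=
  (hN.2.1 0).2 rfl

def toSeminorm (hN : IsNorm N) : Seminorm ℝ E :=
  Seminorm.of N hN.2.2.2 fun a x => by rw [hN.2.2.1, Real.norm_eq_abs]

theorem two_mul_sq_le (hN : IsNorm N) (x h : E) :
    2 * N x ^ 2 ≤ N (x + h) ^ 2 + N (x - h) ^ 2 := by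
  have htwo : 2 * N x ≤ N (x + h) + N (x - h) := by
    have := hN.2.2.2 (x + h) (x - h)
    rwa [show x + h + (x - h) = (2 : ℝ) • x by module, hN.2.2.1, abs_two] at this
  nlinarith [hN.1 x, sq_nonneg (N (x + h) - N (x - h))]

end Module

section FiniteDimensional

variable {E : Type*} [NormedAddCommGroup E] [NormedSpace ℝ E] [FiniteDimensional ℝ E]
  {N : E → ℝ}

theorem continuous (hN : IsNorm N) : Continuous N :=
  continuousOn_univ.1 (hN.toSeminorm.convexOn.continuousOn isOpen_univ)

theorem exists_le_mul_norm (hN : IsNorm N) : ∃ C, ∀ x, N x ≤ C * ‖x‖ :=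
  let ⟨C, _, hC⟩ := hN.toSeminorm.bound_of_continuous_normedSpace hN.continuous
  ⟨C, hC⟩

theorem exists_pos_mul_norm_le (hN : IsNorm N) : ∃ c, 0 < c ∧ ∀ x, c * ‖x‖ ≤ N x := by
  rcases subsingleton_or_nontrivial E with hE | hE
  · exact ⟨1, one_pos, fun x => by simp [Subsingleton.elim x 0, hN.map_zero]⟩
  obtain ⟨x₀, hx₀, hmin⟩ := (isCompact_sphere (0 : E) 1).exists_isMinOn
    (NormedSpace.sphere_nonempty.2 zero_le_one) hN.continuous.continuousOn
  rw [mem_sphere_zero_iff_norm] at hx₀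
  refine ⟨N x₀, (hN.1 x₀).lt_of_ne fun h => ?_, fun x => ?_⟩
  · simp [(hN.2.1 x₀).1 h.symm] at hx₀
  rcases eq_or_ne x 0 with rfl | hx
  · simp [hN.map_zero]
  have hxpos : 0 < ‖x‖ := norm_pos_iff.2 hx
  have hle : N x₀ ≤ N (‖x‖⁻¹ • x) := hmin (by simp [norm_smul, hxpos.ne'])
  rw [hN.2.2.1, abs_of_pos (inv_pos.2 hxpos), le_inv_mul_iff₀ hxpos] at hle
  linarith

theorem exists_isMinOn (hN : IsNorm N) {S : Set E} (hS : IsClosed S) (hne : S.Nonempty) :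
    ∃ x ∈ S, IsMinOn N S x := by
  obtain ⟨x₀, hx₀⟩ := hne
  obtain ⟨c, hc, hcN⟩ := hN.exists_pos_mul_norm_le
  have hcoercive : Tendsto N (cocompact E) atTop :=
    tendsto_atTop_mono hcN (tendsto_norm_cocompact_atTop.const_mul_atTop hc)
  exact hN.continuous.continuousOn.exists_isMinOn' hS hx₀
    ((hcoercive.eventually_ge_atTop (N x₀)).filter_mono inf_le_left)

end FiniteDimensional

end IsNorm

section Gradient

variable {F : Type*} [NormedAddCommGroup F] [InnerProductSpace ℝ F] {f : F → ℝ} {y : F → F}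
  {K : ℝ}

theorem inner_gradient_eq_zero_of_forall_le [CompleteSpace F] {x k : F}
    (hf : DifferentiableAt ℝ f x) (hmin : ∀ t : ℝ, f x ≤ f (x + t • k)) :
    ⟪gradient f x, k⟫ = 0 := by
  have hline : HasDerivAt (fun t : ℝ => x + t • k) k 0 := by
    simpa using ((hasDerivAt_id (0 : ℝ)).smul_const k).const_add x
  have hcomp := hf.hasGradientAt.hasFDerivAt.comp_hasDerivAt_of_eq 0 hline (by simp)
  rw [toDual_apply_apply] at hcomp
  exact IsLocalMin.hasDerivAt_eq_zero (Eventually.of_forall fun t => by simpa using hmin t) hcomp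

theorem abs_sub_sub_inner_le_of_two_mul_le
    (hle : ∀ u v, f (u + v) ≤ f u + ⟪y u, v⟫ + K * ‖v‖ ^ 2)
    (hmid : ∀ u v, 2 * f u ≤ f (u + v) + f (u - v)) (u v : F) :
    |f (u + v) - f u - ⟪y u, v⟫| ≤ K * ‖v‖ ^ 2 := by
  have hneg := hle u (-v)
  rw [inner_neg_right, norm_neg, ← sub_eq_add_neg] at hneg
  rw [abs_le]
  constructor <;> linarith [hle u v, hmid u v]

theorem hasGradientAt_of_abs_sub_sub_inner_le [CompleteSpace F] {g u : F}
    (h : ∀ v, |f (u + v) - f u - ⟪g, v⟫| ≤ K * ‖v‖ ^ 2) : HasGradientAt f g u := by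
  rw [hasGradientAt_iff_isLittleO]
  refine (Asymptotics.IsBigO.of_bound K (Eventually.of_forall fun x => ?_)).trans_isLittleO
    (Asymptotics.isLittleO_pow_sub_sub u one_lt_two)
  simpa [Real.norm_eq_abs] using h (x - u)

theorem lipschitzWith_of_abs_sub_sub_inner_le
    (h : ∀ u v, |f (u + v) - f u - ⟪y u, v⟫| ≤ K * ‖v‖ ^ 2) :
    LipschitzWith (6 * K).toNNReal y := by
  refine LipschitzWith.of_dist_le' fun w u => ?_
  obtain ⟨d, rfl⟩ : ∃ d, w = u + d := ⟨w - u, by abel⟩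
  rw [dist_eq_norm, dist_eq_norm, add_sub_cancel_left]
  rcases eq_or_ne d 0 with rfl | hd
  · simp
  have hdpos : 0 < ‖d‖ := norm_pos_iff.2 hd
  have hK : 0 ≤ K := nonneg_of_mul_nonneg_left ((abs_nonneg _).trans (h u d)) (by positivity)
  set z := y (u + d) - y u
  -- `⟪z, v⟫ = r u (d + v) - r u d - r (u + d) v`, where `r u v = f (u + v) - f u - ⟪y u, v⟫`
  have hinner : ∀ v, ⟪z, v⟫ ≤ K * (‖d + v‖ ^ 2 + ‖d‖ ^ 2 + ‖v‖ ^ 2) := fun v => by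
    have h₁ := abs_le.1 (h u (d + v))
    have h₂ := abs_le.1 (h u d)
    have h₃ := abs_le.1 (h (u + d) v)
    rw [← add_assoc, inner_add_right] at h₁
    rw [inner_sub_left]
    linarith
  rcases eq_or_ne z 0 with hz | hz
  · rw [hz, norm_zero]; positivity
  have hzpos : 0 < ‖z‖ := norm_pos_iff.2 hz
  set v := (‖d‖ / ‖z‖) • z
  have hv : ‖v‖ = ‖d‖ := by
    rw [norm_smul, Real.norm_of_nonneg (by positivity), div_mul_cancel₀ _ hzpos.ne']
  have hzv : ⟪z, v⟫ = ‖d‖ * ‖z‖ := by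
    rw [real_inner_smul_right, real_inner_self_eq_norm_sq]; field_simp
  have hdv : ‖d + v‖ ≤ 2 * ‖d‖ := (norm_add_le d v).trans (by rw [hv]; linarith)
  have := hinner v
  rw [hzv, hv] at this
  nlinarith [pow_le_pow_left₀ (norm_nonneg _) hdv 2]

theorem contDiff_one_of_hasGradientAt [CompleteSpace F] (hf : ∀ u, HasGradientAt f (y u) u)
    (hy : Continuous y) : ContDiff ℝ 1 f := by
  rw [contDiff_one_iff_fderiv]
  refine ⟨fun u => (hf u).differentiableAt, ?_⟩
  rw [funext fun u => (hf u).hasFDerivAt.fderiv]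
  exact (toDual ℝ F).continuous.comp hy

theorem IsSmoothNorm.of_sq_add_le [FiniteDimensional ℝ F] {κ : ℝ} {N : F → ℝ} (hN : IsNorm N)
    (hκ : 0 ≤ κ) (hle : ∀ u v, N (u + v) ^ 2 ≤ N u ^ 2 + ⟪y u, v⟫ + κ * N v ^ 2) :
    IsSmoothNorm κ N := by
  obtain ⟨C, hC⟩ := hN.exists_le_mul_norm
  have hquad : ∀ u v, N (u + v) ^ 2 ≤ N u ^ 2 + ⟪y u, v⟫ + κ * C ^ 2 * ‖v‖ ^ 2 := fun u v => by
    have : N v ^ 2 ≤ (C * ‖v‖) ^ 2 := pow_le_pow_left₀ (hN.1 v) (hC v) 2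
    nlinarith [hle u v]
  have habs := abs_sub_sub_inner_le_of_two_mul_le (f := fun z => N z ^ 2) hquad hN.two_mul_sq_le
  have hgrad u : HasGradientAt (fun z => N z ^ 2) (y u) u :=
    hasGradientAt_of_abs_sub_sub_inner_le (habs u)
  refine ⟨hN, contDiff_one_of_hasGradientAt hgrad
    (lipschitzWith_of_abs_sub_sub_inner_le (f := fun z => N z ^ 2) habs).continuous, fun u v => ?_⟩
  rw [(hgrad u).gradient]
  exact hle u v

end Gradient

section FactorNorm

variable {E F : Type*} [AddCommGroup E] [Module ℝ E] [AddCommGroup F] [Module ℝ F]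

noncomputable def factorNorm (N : E → ℝ) (P : E →ₗ[ℝ] F) (u : F) : ℝ :=
  sInf {r | ∃ x, P x = u ∧ r = N x}

variable {M N : E → ℝ} {P : E →ₗ[ℝ] F}

theorem factorNorm_le (hN : ∀ x, 0 ≤ N x) {x : E} {u : F} (hx : P x = u) :
    factorNorm N P u ≤ N x :=
  csInf_le ⟨0, fun _ ⟨z, _, hr⟩ => hr ▸ hN z⟩ ⟨x, hx, rfl⟩

theorem le_factorNorm (hP : Function.Surjective P) {a : ℝ} {u : F}
    (h : ∀ x, P x = u → a ≤ N x) : a ≤ factorNorm N P u :=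
  let ⟨x₀, hx₀⟩ := hP u
  le_csInf ⟨N x₀, x₀, hx₀, rfl⟩ fun _ ⟨x, hx, hr⟩ => hr ▸ h x hx

theorem mul_factorNorm_le (hM : ∀ x, 0 ≤ M x) (hP : Function.Surjective P) {a : ℝ} (ha : 0 ≤ a)
    (h : ∀ x, a * M x ≤ N x) (u : F) : a * factorNorm M P u ≤ factorNorm N P u :=
  le_factorNorm hP fun x hx => (mul_le_mul_of_nonneg_left (factorNorm_le hM hx) ha).trans (h x)

end FactorNorm

section FactorNormFiniteDimensional

variable {E F : Type*} [NormedAddCommGroup E] [NormedSpace ℝ E] [FiniteDimensional ℝ E]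
  [NormedAddCommGroup F] [NormedSpace ℝ F] {N : E → ℝ} {P : E →ₗ[ℝ] F}

theorem exists_factorNorm_eq (hN : IsNorm N) (hP : Function.Surjective P) (u : F) :
    ∃ x, P x = u ∧ factorNorm N P u = N x := by
  obtain ⟨x, hx, hmin⟩ :=
    hN.exists_isMinOn (isClosed_eq P.continuous_of_finiteDimensional continuous_const) (hP u)
  exact ⟨x, hx, le_antisymm (factorNorm_le hN.1 hx) (le_factorNorm hP fun z hz => hmin hz)⟩

theorem isNorm_factorNorm (hN : IsNorm N) (hP : Function.Surjective P) :
    IsNorm (factorNorm N P) := by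
  have hnonneg u : 0 ≤ factorNorm N P u := le_factorNorm hP fun x _ => hN.1 x
  have hsmul_le (t : ℝ) u : factorNorm N P (t • u) ≤ |t| * factorNorm N P u := by
    obtain ⟨x, rfl, hx⟩ := exists_factorNorm_eq hN hP u
    rw [hx, ← hN.2.2.1]
    exact factorNorm_le hN.1 (map_smul P t x)
  refine ⟨hnonneg, fun u => ⟨fun hu => ?_, ?_⟩, fun t u => ?_, fun u v => ?_⟩
  · obtain ⟨x, rfl, hx⟩ := exists_factorNorm_eq hN hP u
    rw [(hN.2.1 x).1 (hx ▸ hu), map_zero]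
  · rintro rfl
    exact le_antisymm (by simpa using hsmul_le 0 0) (hnonneg 0)
  · refine (hsmul_le t u).antisymm ?_
    rcases eq_or_ne t 0 with rfl | ht
    · simpa using hnonneg _
    calc |t| * factorNorm N P u = |t| * factorNorm N P (t⁻¹ • t • u) := by
          rw [inv_smul_smul₀ ht]
      _ ≤ |t| * (|t⁻¹| * factorNorm N P (t • u)) := by gcongr; exact hsmul_le _ _
      _ = factorNorm N P (t • u) := by rw [abs_inv, mul_inv_cancel_left₀ (abs_ne_zero.2 ht)]
  · obtain ⟨x, rfl, hx⟩ := exists_factorNorm_eq hN hP u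
    obtain ⟨w, rfl, hw⟩ := exists_factorNorm_eq hN hP v
    rw [hx, hw, ← map_add]
    exact (factorNorm_le hN.1 rfl).trans (hN.2.2.2 x w)

end FactorNormFiniteDimensional

section SmoothFactorNorm

variable {E F : Type*} [NormedAddCommGroup E] [InnerProductSpace ℝ E] [FiniteDimensional ℝ E]
  [NormedAddCommGroup F] [InnerProductSpace ℝ F] [FiniteDimensional ℝ F]
  {κ : ℝ} {M : E → ℝ} {P : E →ₗ[ℝ] F}

theorem exists_sq_factorNorm_add_le (hM : IsSmoothNorm κ M) (hP : Function.Surjective P) :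
    ∃ y : F → F, ∀ u v, factorNorm M P (u + v) ^ 2 ≤
      factorNorm M P u ^ 2 + ⟪y u, v⟫ + κ * factorNorm M P v ^ 2 := by
  obtain ⟨hMn, hC1, hsmooth⟩ := hM
  set Φ := fun z => M z ^ 2
  choose x hxP hx using exists_factorNorm_eq hMn hP
  have hperp u k (hk : P k = 0) : ⟪gradient Φ (x u), k⟫ = 0 := by
    refine inner_gradient_eq_zero_of_forall_le (hC1.differentiable one_ne_zero _) fun t => ?_
    have hPt : P (x u + t • k) = u := by simp [hk, hxP]
    exact pow_le_pow_left₀ (hMn.1 _) (hx u ▸ factorNorm_le hMn.1 hPt) 2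
  obtain ⟨Q, hQ⟩ := P.exists_rightInverse_of_surjective (LinearMap.range_eq_top.2 hP)
  refine ⟨fun u => LinearMap.adjoint Q (gradient Φ (x u)), fun u v => ?_⟩
  have hinner : ⟪LinearMap.adjoint Q (gradient Φ (x u)), v⟫ = ⟪gradient Φ (x u), x v⟫ := by
    have hker : P (Q v - x v) = 0 := by
      rw [map_sub, hxP, sub_eq_zero]
      exact LinearMap.congr_fun hQ v
    rw [LinearMap.adjoint_inner_left, ← sub_eq_zero, ← inner_sub_right]
    exact hperp u _ hker
  rw [hinner, hx u, hx v]
  have hlift : P (x u + x v) = u + v := by simp [hxP]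
  calc factorNorm M P (u + v) ^ 2 ≤ Φ (x u + x v) :=
        pow_le_pow_left₀ ((isNorm_factorNorm hMn hP).1 _) (factorNorm_le hMn.1 hlift) 2
    _ ≤ _ := hsmooth _ _

theorem isSmoothNorm_factorNorm (hκ : 0 ≤ κ) (hM : IsSmoothNorm κ M)
    (hP : Function.Surjective P) : IsSmoothNorm κ (factorNorm M P) :=
  let ⟨_, hy⟩ := exists_sq_factorNorm_add_le hM hP
  .of_sq_add_le (isNorm_factorNorm hM.1 hP) hκ hy

end SmoothFactorNorm

/-- the factor-norm of a `(κ,ς)`-regular norm under a surjective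
linear map is `(κ,ς)`-regular. -/
theorem stmt_10 {n p : ℕ} (κ ς : ℝ) (hκ : 1 ≤ κ) (hς : 1 ≤ ς)
    (N : EuclideanSpace ℝ (Fin n) → ℝ) (hN : IsNorm N)
    (hreg : IsRegularNorm κ ς N)
    (P : EuclideanSpace ℝ (Fin n) →ₗ[ℝ] EuclideanSpace ℝ (Fin p))
    (hP : Function.Surjective P)
    (N' : EuclideanSpace ℝ (Fin p) → ℝ)
    (hN' : ∀ u, N' u = sInf {r | ∃ x, P x = u ∧ r = N x}) :
    IsRegularNorm κ ς N' := by
  obtain ⟨M, hM, hMN⟩ := hreg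
  obtain rfl : N' = factorNorm N P := funext hN'
  have hς₀ : 0 < ς := zero_lt_one.trans_le hς
  have hςinv : 0 ≤ ς⁻¹ := inv_nonneg.2 hς₀.le
  refine ⟨factorNorm M P, isSmoothNorm_factorNorm (by linarith) hM hP, fun u => ⟨?_, ?_⟩⟩
  · exact mul_factorNorm_le hM.1.1 hP hςinv (fun x => (hMN x).1) u
  · refine (inv_mul_le_iff₀ hς₀).1 (mul_factorNorm_le hN.1 hP hςinv (fun x => ?_) u)
    exact (inv_mul_le_iff₀ hς₀).2 (hMN x).2
end
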